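/- Let x ∈ ℝ³ with ‖x‖ = 1, n⃗ = x, Π = I − xxᵀ, and a positive definite 3×3 matrix. Set n_a = x/‖x‖_a where ‖x‖_a² = xᵀa⁻¹x. Then for any v in the tangent space {v : ⟨v,x⟩ = 0}, the a-norm minimizer Π⁻¹v of {u : Πu = v} is given explicitly by Π⁻¹v = v − ⟨v, n_a⟩_a n_a, and consequently ‖Π⁻¹v‖_a² = ‖v‖_a² − (⟨n_a, v⟩_a)². -/

import Mathlib

open Matrix

/-- The `a`-weighted inner product `⟨u,v⟩_a = uᵀ a⁻¹ v`. -/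
noncomputable def ainner {n : ℕ} (a : Matrix (Fin n) (Fin n) ℝ) (u v : Fin n → ℝ) : ℝ :=
  u ⬝ᵥ (a⁻¹ *ᵥ v)

/-- The `a`-weighted norm `‖u‖_a = √(uᵀ a⁻¹ u)`. -/
noncomputable def anorm {n : ℕ} (a : Matrix (Fin n) (Fin n) ℝ) (u : Fin n → ℝ) : ℝ :=
  Real.sqrt (ainner a u u)

/-- `ustar` minimizes the `a`-norm over the affine set `{u : Π u = v}`. -/
def IsAMinimizer {n : ℕ} (P a : Matrix (Fin n) (Fin n) ℝ) (v ustar : Fin n → ℝ) : Prop :=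
  P *ᵥ ustar = v ∧ ∀ u : Fin n → ℝ, P *ᵥ u = v → anorm a ustar ≤ anorm a u

section AInner

variable {n : ℕ} {a : Matrix (Fin n) (Fin n) ℝ}

lemma ainner_comm (ha : a.IsSymm) (u w : Fin n → ℝ) : ainner a u w = ainner a w u := by
  rw [ainner, ainner, dotProduct_comm, dotProduct_mulVec, ← mulVec_transpose,
    transpose_nonsing_inv, ha.eq]

lemma ainner_add_left (u w z : Fin n → ℝ) :
    ainner a (u + w) z = ainner a u z + ainner a w z := by
  simp [ainner, add_dotProduct]

lemma ainner_smul_left (c : ℝ) (u z : Fin n → ℝ) : ainner a (c • u) z = c * ainner a u z := by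
  simp [ainner, smul_dotProduct]

lemma ainner_smul_right (c : ℝ) (u z : Fin n → ℝ) : ainner a u (c • z) = c * ainner a u z := by
  simp [ainner, mulVec_smul, dotProduct_smul]

lemma ainner_sub_left (u w z : Fin n → ℝ) :
    ainner a (u - w) z = ainner a u z - ainner a w z := by
  simp [ainner, sub_dotProduct]

lemma ainner_self_pos (ha : a.PosDef) {u : Fin n → ℝ} (hu : u ≠ 0) : 0 < ainner a u u := by
  simpa [ainner] using ha.inv.dotProduct_mulVec_pos hu

lemma ainner_self_nonneg (ha : a.PosDef) (u : Fin n → ℝ) : 0 ≤ ainner a u u := by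
  rcases eq_or_ne u 0 with rfl | hu
  · simp [ainner]
  · exact (ainner_self_pos ha hu).le

lemma ainner_add_smul_self_of_ainner_eq_zero (ha : a.IsSymm) {w x : Fin n → ℝ}
    (hwx : ainner a w x = 0) (t : ℝ) :
    ainner a (w + t • x) (w + t • x) = ainner a w w + t ^ 2 * ainner a x x := by
  have hxw : ainner a x w = 0 := by rw [ainner_comm ha, hwx]
  simp only [ainner_add_left, ainner_smul_left, ainner_smul_right, ainner_comm ha _ (w + t • x),
    hwx, hxw]
  ring

lemma inv_anorm_sq {x : Fin n → ℝ} (hx : 0 ≤ ainner a x x) :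
    (anorm a x)⁻¹ ^ 2 = (ainner a x x)⁻¹ := by
  rw [anorm, inv_pow, Real.sq_sqrt hx]

/-- The paper's `v - ⟨v, n_a⟩_a n_a`, written without normalising `x`. -/
noncomputable def aperp (a : Matrix (Fin n) (Fin n) ℝ) (x v : Fin n → ℝ) : Fin n → ℝ :=
  v - (ainner a v x / ainner a x x) • x

lemma ainner_aperp_left {x : Fin n → ℝ} (hx : ainner a x x ≠ 0) (v : Fin n → ℝ) :
    ainner a (aperp a x v) x = 0 := by
  rw [aperp, ainner_sub_left, ainner_smul_left, div_mul_cancel₀ _ hx, sub_self]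

lemma ainner_aperp_self (ha : a.IsSymm) {x : Fin n → ℝ} (hx : ainner a x x ≠ 0)
    (v : Fin n → ℝ) :
    ainner a (aperp a x v) (aperp a x v) = ainner a v v - ainner a v x ^ 2 / ainner a x x := by
  have hv : ainner a v v = ainner a (aperp a x v) (aperp a x v)
      + (ainner a v x / ainner a x x) ^ 2 * ainner a x x := by
    rw [← ainner_add_smul_self_of_ainner_eq_zero ha (ainner_aperp_left hx v), aperp,
      sub_add_cancel]
  rw [hv]
  field_simp
  ring

lemma aperp_eq_sub_ainner_smul_normalize {x : Fin n → ℝ} (hx : 0 ≤ ainner a x x)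
    (v : Fin n → ℝ) :
    aperp a x v = v - ainner a v ((anorm a x)⁻¹ • x) • ((anorm a x)⁻¹ • x) := by
  rw [aperp, ainner_smul_right, smul_smul, mul_right_comm, ← sq, inv_anorm_sq hx,
    div_eq_inv_mul]

lemma ainner_normalize_sq (ha : a.IsSymm) {x : Fin n → ℝ} (hx : 0 ≤ ainner a x x)
    (v : Fin n → ℝ) :
    ainner a ((anorm a x)⁻¹ • x) v ^ 2 = ainner a v x ^ 2 / ainner a x x := by
  rw [ainner_smul_left, mul_pow, inv_anorm_sq hx, ainner_comm ha x v, inv_mul_eq_div]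

end AInner

lemma one_sub_vecMulVec_mulVec {m R : Type*} [Fintype m] [DecidableEq m] [CommRing R]
    (x u : m → R) : (1 - vecMulVec x x) *ᵥ u = u - (x ⬝ᵥ u) • x := by
  rw [sub_mulVec, one_mulVec, vecMulVec_mulVec, op_smul_eq_smul]

lemma one_sub_vecMulVec_mulVec_add_smul {m R : Type*} [Fintype m] [DecidableEq m] [CommRing R]
    {x v : m → R} (hx : x ⬝ᵥ x = 1) (hv : x ⬝ᵥ v = 0) (t : R) :
    (1 - vecMulVec x x) *ᵥ (v + t • x) = v := by
  rw [one_sub_vecMulVec_mulVec, dotProduct_add, dotProduct_smul, hv, hx, smul_eq_mul, mul_one,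
    zero_add, add_sub_cancel_right]

/-- Writing `u = aperp a x v + t • x`, the constraint fixes nothing but `t`, and by
Pythagoras the `a`-norm of `u` exceeds that of `aperp a x v` by `t² ‖x‖_a²`. -/
theorem IsAMinimizer.eq_aperp {n : ℕ} {a : Matrix (Fin n) (Fin n) ℝ} (ha : a.PosDef)
    {x v u : Fin n → ℝ} (hx : x ⬝ᵥ x = 1) (hv : v ⬝ᵥ x = 0)
    (hmin : IsAMinimizer (1 - vecMulVec x x) a v u) : u = aperp a x v := by
  have hsymm : a.IsSymm := isHermitian_iff_isSymm.mp ha.isHermitian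
  have hX : 0 < ainner a x x := ainner_self_pos ha fun h => by simp [h] at hx
  set c := ainner a v x / ainner a x x
  have hfeas : (1 - vecMulVec x x) *ᵥ aperp a x v = v := by
    have h := one_sub_vecMulVec_mulVec_add_smul hx (by rwa [dotProduct_comm]) (-c)
    rwa [neg_smul, ← sub_eq_add_neg] at h
  have hu : u = aperp a x v + (x ⬝ᵥ u + c) • x :=
    calc u = v + (x ⬝ᵥ u) • x := by rw [← hmin.1, one_sub_vecMulVec_mulVec, sub_add_cancel]
      _ = aperp a x v + (x ⬝ᵥ u + c) • x := by rw [aperp]; module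
  have hle : ainner a u u ≤ ainner a (aperp a x v) (aperp a x v) :=
    (Real.sqrt_le_sqrt_iff (ainner_self_nonneg ha _)).mp (hmin.2 _ hfeas)
  rw [hu, ainner_add_smul_self_of_ainner_eq_zero hsymm (ainner_aperp_left hX.ne' v)] at hle
  have ht : x ⬝ᵥ u + c = 0 :=
    (sq_nonpos_iff _).mp (nonpos_of_mul_nonpos_left (by linarith) hX)
  rw [hu, ht, zero_smul, add_zero]

theorem stmt10_general (a : Matrix (Fin 3) (Fin 3) ℝ) (ha : a.PosDef)
    (x : Fin 3 → ℝ) (hx : x ⬝ᵥ x = 1)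
    (v : Fin 3 → ℝ) (hv : v ⬝ᵥ x = 0)
    (Pinv_v : Fin 3 → ℝ)
    (hmin : IsAMinimizer (1 - vecMulVec x x) a v Pinv_v) :
    Pinv_v = v - ainner a v ((anorm a x)⁻¹ • x) • ((anorm a x)⁻¹ • x) ∧
      ainner a Pinv_v Pinv_v =
        ainner a v v - (ainner a ((anorm a x)⁻¹ • x) v) ^ 2 := by
  have hsymm : a.IsSymm := isHermitian_iff_isSymm.mp ha.isHermitian
  have hX : 0 < ainner a x x := ainner_self_pos ha fun h => by simp [h] at hx
  obtain rfl := hmin.eq_aperp ha hx hv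
  exact ⟨aperp_eq_sub_ainner_smul_normalize hX.le v,
    by rw [ainner_aperp_self hsymm hX.ne', ainner_normalize_sq hsymm hX.le]⟩

theorem stmt10 (a : Matrix (Fin 3) (Fin 3) ℝ) (ha : a.PosDef) (haSymm : a.IsSymm)
    (x : Fin 3 → ℝ) (hx : x ⬝ᵥ x = 1)
    (v : Fin 3 → ℝ) (hv : v ⬝ᵥ x = 0)
    (Pinv_v : Fin 3 → ℝ)
    (hmin : IsAMinimizer (1 - vecMulVec x x) a v Pinv_v) :
    Pinv_v = v - ainner a v ((anorm a x)⁻¹ • x) • ((anorm a x)⁻¹ • x) ∧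
      ainner a Pinv_v Pinv_v =
        ainner a v v - (ainner a ((anorm a x)⁻¹ • x) v) ^ 2 :=
  stmt10_general a ha x hx v hv Pinv_v hmin
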